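/- Let P be a regular poset on [n] and i ∈ [n-1]. If i ≼_P i+1 is a covering relation, then swapping the labels i and i+1 yields a regular poset s_i · P that is distinct from P as an edge-decorated poset (the covering edge changes from weak to strict). -/

import Mathlib

/-- The adjacent transposition `s_i` of `Fin n` (0-indexed), swapping `i` and `i+1`. -/
def adj (n i : ℕ) (h : i + 1 < n) : Equiv.Perm (Fin n) :=
  Equiv.swap ⟨i, Nat.lt_of_succ_lt h⟩ ⟨i + 1, h⟩

/-- A poset with ground set `Fin n` (`[n]`, 0-indexed). -/
structure FinPoset (n : ℕ) where
  le : Fin n → Fin n → Prop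
  refl : ∀ a, le a a
  trans : ∀ a b c, le a b → le b c → le a c
  antisymm : ∀ a b, le a b → le b a → a = b

/-- `Σ_L(P)`: the permutations `σ` with `σ(i) ≤ σ(j)` whenever `i ≼_P j`. -/
def SigmaL {n : ℕ} (P : FinPoset n) : Set (Equiv.Perm (Fin n)) :=
  {σ | ∀ i j : Fin n, P.le i j → σ i ≤ σ j}

/-- `P` is regular: whenever `x ≼_P z` and `y` lies strictly between `x` and `z` in the
integer order, `x ≼_P y` or `y ≼_P z`. -/
def Regular {n : ℕ} (P : FinPoset n) : Prop :=
  ∀ x y z : Fin n, P.le x z → ((x < y ∧ y < z) ∨ (z < y ∧ y < x)) →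
    P.le x y ∨ P.le y z

/-- The poset `σ · P`, obtained by relabelling: `i ≼ j` iff `σ⁻¹(i) ≼_P σ⁻¹(j)`. -/
def permPoset {n : ℕ} (σ : Equiv.Perm (Fin n)) (P : FinPoset n) : FinPoset n where
  le i j := P.le (σ⁻¹ i) (σ⁻¹ j)
  refl _ := P.refl _
  trans _ _ _ h1 h2 := P.trans _ _ _ h1 h2
  antisymm _ _ h1 h2 := σ⁻¹.injective (P.antisymm _ _ h1 h2)

/-- `b` covers `a` in `P`. -/
def Covers {n : ℕ} (P : FinPoset n) (a b : Fin n) : Prop :=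
  a ≠ b ∧ P.le a b ∧ ¬ ∃ c, c ≠ a ∧ c ≠ b ∧ P.le a c ∧ P.le c b

/-- `a` and `b` are comparable in `P`. -/
def Cmp {n : ℕ} (P : FinPoset n) (a b : Fin n) : Prop :=
  P.le a b ∨ P.le b a


/-! Swapping the labels of a pair `a ⋖ b` that is adjacent in the integer order preserves the
relative order of every other pair of labels. So a label between two others stays between them
after the swap unless one of the two pairs involved is `{a, b}`, and those two labels are
comparable in `s_i · P` (now `b ≼ a`), where transitivity gives the regularity condition. -/

open Equiv

theorem swap_lt_swap_of_covBy {α : Type*} [LinearOrder α] {a b x y : α}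
    (hab : a ⋖ b) (hxy : x < y) (hne : s(x, y) ≠ s(a, b)) : swap a b x < swap a b y := by
  simp only [ne_eq, Sym2.eq_iff, not_or, not_and] at hne
  have := hab.lt
  have := hab.ge_of_gt (c := y)
  have := hab.le_of_lt (c := x)
  rw [swap_apply_def, swap_apply_def]
  split_ifs <;> grind

section

variable {n : ℕ} (P : FinPoset n)

theorem permPoset_le (σ : Perm (Fin n)) (x y : Fin n) :
    (permPoset σ P).le x y ↔ P.le (σ⁻¹ x) (σ⁻¹ y) := Iff.rfl

theorem permPoset_swap_le (a b x y : Fin n) :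
    (permPoset (swap a b) P).le x y ↔ P.le (swap a b x) (swap a b y) := by
  rw [permPoset_le, swap_inv]

variable {P}

theorem Cmp.symm {a b : Fin n} (h : Cmp P a b) : Cmp P b a := Or.symm h

theorem Cmp.of_sym2_eq {a b x y : Fin n} (h : Cmp P a b) (hxy : s(x, y) = s(a, b)) :
    Cmp P x y := by
  rcases Sym2.eq_iff.mp hxy with ⟨rfl, rfl⟩ | ⟨rfl, rfl⟩
  exacts [h, h.symm]

theorem Cmp.le_or_le_of_le_left {x y z : Fin n} (hxy : Cmp P x y) (hxz : P.le x z) :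
    P.le x y ∨ P.le y z :=
  hxy.imp_right fun hyx => P.trans _ _ _ hyx hxz

theorem Cmp.le_or_le_of_le_right {x y z : Fin n} (hyz : Cmp P y z) (hxz : P.le x z) :
    P.le x y ∨ P.le y z :=
  hyz.symm.imp_left fun hzy => P.trans _ _ _ hxz hzy

theorem Covers.permPoset {a b : Fin n} (h : Covers P a b) (σ : Perm (Fin n)) :
    Covers (permPoset σ P) (σ a) (σ b) := by
  obtain ⟨hne, hle, hmin⟩ := h
  refine ⟨σ.injective.ne hne, by simpa [permPoset_le] using hle, ?_⟩
  rintro ⟨c, hca, hcb, hac, hcb_le⟩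
  refine hmin ⟨σ⁻¹ c, ?_, ?_, by simpa [permPoset_le] using hac,
    by simpa [permPoset_le] using hcb_le⟩
  · rintro rfl; simp at hca
  · rintro rfl; simp at hcb

theorem le_ne_of_covers_of_covers {Q : FinPoset n} {a b : Fin n} (hP : Covers P a b)
    (hQ : Covers Q b a) : Q.le ≠ P.le := fun h =>
  hP.1 (P.antisymm _ _ hP.2.1 (h ▸ hQ.2.1))

theorem Regular.permPoset_swap (hP : Regular P) {a b : Fin n} (hab : a ⋖ b) (hle : P.le a b) :
    Regular (permPoset (swap a b) P) := by
  have hcmp : Cmp (permPoset (swap a b) P) a b :=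
    Or.inr (by simpa [permPoset_swap_le] using hle)
  intro x y z hxz hbet
  by_cases hxy : s(x, y) = s(a, b)
  · exact (hcmp.of_sym2_eq hxy).le_or_le_of_le_left hxz
  by_cases hyz : s(y, z) = s(a, b)
  · exact (hcmp.of_sym2_eq hyz).le_or_le_of_le_right hxz
  have hyx : s(y, x) ≠ s(a, b) := by rwa [Sym2.eq_swap]
  have hzy : s(z, y) ≠ s(a, b) := by rwa [Sym2.eq_swap]
  simp only [permPoset_swap_le] at hxz ⊢
  refine hP _ _ _ hxz (hbet.imp (fun ⟨h₁, h₂⟩ => ?_) fun ⟨h₁, h₂⟩ => ?_)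
  · exact ⟨swap_lt_swap_of_covBy hab h₁ hxy, swap_lt_swap_of_covBy hab h₂ hyz⟩
  · exact ⟨swap_lt_swap_of_covBy hab h₁ hzy, swap_lt_swap_of_covBy hab h₂ hyx⟩

end

/-- If `i ≼_P i+1` is a covering relation in a regular poset `P`, then
swapping the labels `i` and `i+1` yields a regular poset `s_i · P`, distinct from `P`
(as an edge-decorated poset: the covering edge `i+1 ⋖ i` of `s_i · P` is now strict). -/
theorem stmt8 (n : ℕ) (P : FinPoset n) (hP : Regular P) (i : ℕ) (h : i + 1 < n)
    (hcov : Covers P ⟨i, Nat.lt_of_succ_lt h⟩ ⟨i + 1, h⟩) :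
    Regular (permPoset (adj n i h) P) ∧
      Covers (permPoset (adj n i h) P) ⟨i + 1, h⟩ ⟨i, Nat.lt_of_succ_lt h⟩ ∧
      (permPoset (adj n i h) P).le ≠ P.le := by
  have hab : (⟨i, Nat.lt_of_succ_lt h⟩ : Fin n) ⋖ ⟨i + 1, h⟩ := by simp
  have hcov' : Covers (permPoset (adj n i h) P) ⟨i + 1, h⟩ ⟨i, Nat.lt_of_succ_lt h⟩ := by
    simpa [adj] using hcov.permPoset (adj n i h)
  exact ⟨hP.permPoset_swap hab hcov.2.1, hcov', le_ne_of_covers_of_covers hcov hcov'⟩
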